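/- Product with the logic of 'elsewhere' (Diff) and the one-variable fragment with quantifier subscripts ≤ 1: let φ be a propositional bimodal formula in ◇_h, ◇_v with modal depth m. Associate with each propositional variable p_i a unary predicate P_i and with each ψ ∈ sub(φ) a fresh unary predicate Q_ψ, and define the translation ·^† by: p_i^† = P_i(x), ·^† commutes with ¬ and ∧, (◇_hψ)^† = ◇ψ^†, (◇_vψ)^† = Q_ψ(x). Let ∃^{≠}x ψ^† := (¬ψ^† ∧ ¬∃[≤0]x ψ^†) ∨ ¬∃[≤1]x ψ^† (expressing that some element other than the current one satisfies ψ^†), and let ζ_Diff := □^{≤m} ⋀_{ψ∈sub(φ)} ∀x(Q_ψ(x) ↔ ∃^{≠}x ψ^†). Then φ is satisfiable in some full product model whose vertical factor is the difference frame on a nonempty set V if and only if ζ_Diff ∧ φ^† is satisfiable with respect to QK (i.e., in some constant domain first-order Kripke model). All counting quantifiers occurring in ζ_Diff ∧ φ^† have subscripts at most 1. -/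

import Mathlib

/-! Syntax of one-variable first-order modal formulas with counting quantifiers:
    φ ::= P(x) | ¬φ | (φ∧φ) | ◇φ | ∃[≤c]x φ. -/

inductive Fml : Type
  | atom : ℕ → Fml
  | neg : Fml → Fml
  | conj : Fml → Fml → Fml
  | dia : Fml → Fml
  | countLe : ℕ → Fml → Fml
deriving DecidableEq

namespace Fml

/-- Subformulas. -/
def sub : Fml → Finset Fml
  | atom n => {atom n}
  | neg ψ => insert (neg ψ) ψ.sub
  | conj ψ χ => insert (conj ψ χ) (ψ.sub ∪ χ.sub)
  | dia ψ => insert (dia ψ) ψ.sub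
  | countLe c ψ => insert (countLe c ψ) ψ.sub

/-- Modal depth. -/
def md : Fml → ℕ
  | atom _ => 0
  | neg ψ => ψ.md
  | conj ψ χ => max ψ.md χ.md
  | dia ψ => ψ.md + 1
  | countLe _ ψ => ψ.md

/-- Capacity: the largest counting-quantifier subscript (0 if none). -/
def cpt : Fml → ℕ
  | atom _ => 0
  | neg ψ => ψ.cpt
  | conj ψ χ => max ψ.cpt χ.cpt
  | dia ψ => ψ.cpt
  | countLe c ψ => max c ψ.cpt

/-- Length of the formula as a string, counting subscripts written in binary. -/
def len : Fml → ℕ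
  | atom _ => 1
  | neg ψ => ψ.len + 1
  | conj ψ χ => ψ.len + χ.len + 1
  | dia ψ => ψ.len + 1
  | countLe c ψ => ψ.len + Nat.size c + 1

/-- Predicate symbols occurring in a formula. -/
def preds : Fml → Finset ℕ
  | atom n => {n}
  | neg ψ => ψ.preds
  | conj ψ χ => ψ.preds ∪ χ.preds
  | dia ψ => ψ.preds
  | countLe _ ψ => ψ.preds

def imp (ψ χ : Fml) : Fml := neg (conj ψ (neg χ))
def or (ψ χ : Fml) : Fml := neg (conj (neg ψ) (neg χ))
def iff (ψ χ : Fml) : Fml := conj (ψ.imp χ) (χ.imp ψ)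
def box (ψ : Fml) : Fml := neg (dia (neg ψ))
/-- `∃x ψ := ¬∃[≤0]x ψ`. -/
def ex (ψ : Fml) : Fml := neg (countLe 0 ψ)
/-- `∀x ψ := ∃[≤0]x ¬ψ`. -/
def fal (ψ : Fml) : Fml := countLe 0 (neg ψ)
/-- A tautology. -/
def top : Fml := neg (conj (atom 0) (neg (atom 0)))

/-- `boxIter n ψ` is `□^n ψ`. -/
def boxIter : ℕ → Fml → Fml
  | 0, ψ => ψ
  | n+1, ψ => (boxIter n ψ).box

/-- `boxLe m ψ` is `⋀_{k=0}^{m} □^k ψ`. -/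
def boxLe : ℕ → Fml → Fml
  | 0, ψ => ψ
  | n+1, ψ => conj (boxLe n ψ) (boxIter (n+1) ψ)

end Fml

/-- A first-order Kripke model `M = (W,R,D,d,I)` (unary predicates suffice for the
one-variable fragment). -/
structure KModel where
  W : Type
  R : W → W → Prop
  D : Type
  Dne : Nonempty D
  dom : W → Set D
  domNe : ∀ w, (dom w).Nonempty
  I : W → ℕ → Set D
  Isub : ∀ w p, I w p ⊆ dom w

/-- Satisfaction `M,w ⊨^a φ`. -/
def KModel.sat (M : KModel) : Fml → M.W → M.D → Prop
  | .atom p, w, a => a ∈ M.I w p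
  | .neg ψ, w, a => ¬ M.sat ψ w a
  | .conj ψ χ, w, a => M.sat ψ w a ∧ M.sat χ w a
  | .dia ψ, w, a => ∃ v, M.R w v ∧ M.sat ψ v a
  | .countLe c ψ, w, _ => {b | b ∈ M.dom w ∧ M.sat ψ w b}.encard ≤ (c : ℕ∞)

def KModel.constDom (M : KModel) : Prop := ∀ u v, M.dom u = M.dom v
def KModel.expDom (M : KModel) : Prop := ∀ u v, M.R u v → M.dom u ⊆ M.dom v
def KModel.decDom (M : KModel) : Prop := ∀ u v, M.R u v → M.dom v ⊆ M.dom u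

/-- Satisfiability with respect to QK (constant domains). -/
def satQK (φ : Fml) : Prop :=
  ∃ M : KModel, M.constDom ∧ ∃ w a, a ∈ M.dom w ∧ M.sat φ w a

/-- Satisfiability with respect to QK^exp (expanding domains). -/
def satQKexp (φ : Fml) : Prop :=
  ∃ M : KModel, M.expDom ∧ ∃ w a, a ∈ M.dom w ∧ M.sat φ w a

/-- Satisfiability with respect to QK^dec (decreasing domains). -/
def satQKdec (φ : Fml) : Prop :=
  ∃ M : KModel, M.decDom ∧ ∃ w a, a ∈ M.dom w ∧ M.sat φ w a

/-- `R` is the immediate-successor (parent–child) relation of a rooted irreflexive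
intransitive tree of depth ≤ m with root `r`. -/
def IsTreeOfDepth {W : Type} (R : W → W → Prop) (r : W) (m : ℕ) : Prop :=
  ∃ depth : W → ℕ,
    depth r = 0 ∧ (∀ w, depth w ≤ m) ∧
    (∀ u v, R u v → depth v = depth u + 1) ∧
    (∀ v, v ≠ r → ∃! u, R u v) ∧
    (∀ v, Relation.ReflTransGen R r v)

/-! Propositional bimodal formulas: `◇` (= ◇_h) and `◇U` (the second modality,
read as the universal modality ◇_u or as the vertical modality ◇_v). -/

inductive BFml : Type
  | var : ℕ → BFml
  | neg : BFml → BFml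
  | conj : BFml → BFml → BFml
  | dia : BFml → BFml
  | diaU : BFml → BFml
deriving DecidableEq

namespace BFml

/-- Subformulas. -/
def subf : BFml → Finset BFml
  | var n => {var n}
  | neg ψ => insert (neg ψ) ψ.subf
  | conj ψ χ => insert (conj ψ χ) (ψ.subf ∪ χ.subf)
  | dia ψ => insert (dia ψ) ψ.subf
  | diaU ψ => insert (diaU ψ) ψ.subf

/-- Modal depth. -/
def md : BFml → ℕ
  | var _ => 0
  | neg ψ => ψ.md
  | conj ψ χ => max ψ.md χ.md
  | dia ψ => ψ.md + 1
  | diaU ψ => ψ.md + 1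

end BFml

/-- Conjunction of a list of formulas. -/
def conjList : List Fml → Fml
  | [] => Fml.top
  | ψ :: rest => Fml.conj ψ (conjList rest)

/-- A subframe product model: a nonempty set `S ⊆ W_h × V` of possible worlds, with the
horizontal relation induced by `Rh` and a vertical factor on `V` (universal for S5,
difference for Diff), together with a valuation. -/
structure ProdModel where
  Wh : Type
  Rh : Wh → Wh → Prop
  V : Type
  Vne : Nonempty V
  S : Set (Wh × V)
  Sne : S.Nonempty
  Val : ℕ → Set (Wh × V)

namespace ProdModel

/-- Satisfaction when the vertical factor is the universal (S5) frame on `V`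
(`◇U` is read as `◇_v`). -/
def satS5 (M : ProdModel) : BFml → M.Wh × M.V → Prop
  | .var k, p => p ∈ M.Val k
  | .neg ψ, p => ¬ M.satS5 ψ p
  | .conj ψ χ, p => M.satS5 ψ p ∧ M.satS5 χ p
  | .dia ψ, p => ∃ q, q ∈ M.S ∧ M.Rh p.1 q.1 ∧ p.2 = q.2 ∧ M.satS5 ψ q
  | .diaU ψ, p => ∃ q, q ∈ M.S ∧ q.1 = p.1 ∧ M.satS5 ψ q

/-- Satisfaction when the vertical factor is the difference (Diff) frame on `V`
(`◇U` is read as `◇_v`). -/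
def satDiff (M : ProdModel) : BFml → M.Wh × M.V → Prop
  | .var k, p => p ∈ M.Val k
  | .neg ψ, p => ¬ M.satDiff ψ p
  | .conj ψ χ, p => M.satDiff ψ p ∧ M.satDiff χ p
  | .dia ψ, p => ∃ q, q ∈ M.S ∧ M.Rh p.1 q.1 ∧ p.2 = q.2 ∧ M.satDiff ψ q
  | .diaU ψ, p => ∃ q, q ∈ M.S ∧ q.1 = p.1 ∧ q.2 ≠ p.2 ∧ M.satDiff ψ q

/-- Full product model. -/
def Full (M : ProdModel) : Prop := M.S = Set.univ

/-- Expanding product model. -/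
def Expanding (M : ProdModel) : Prop :=
  ∀ u u' v, (u, v) ∈ M.S → M.Rh u u' → (u', v) ∈ M.S

/-- Decreasing product model. -/
def Decreasing (M : ProdModel) : Prop :=
  ∀ u u' v, (u', v) ∈ M.S → M.Rh u u' → (u, v) ∈ M.S

end ProdModel

/-- The translation ·^†: `p_i^† = P_i(x)`, commuting with ¬ and ∧, `(◇_hψ)^† = ◇ψ^†`,
`(◇_vψ)^† = Q_ψ(x)`. -/
def transDiff (P : ℕ → ℕ) (Q : BFml → ℕ) : BFml → Fml
  | .var k => .atom (P k)
  | .neg ψ => .neg (transDiff P Q ψ)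
  | .conj ψ χ => .conj (transDiff P Q ψ) (transDiff P Q χ)
  | .dia ψ => .dia (transDiff P Q ψ)
  | .diaU ψ => .atom (Q ψ)

/-- `∃^{≠}x χ := (¬χ ∧ ¬∃[≤0]x χ) ∨ ¬∃[≤1]x χ`. -/
def existsNe (χ : Fml) : Fml :=
  ((Fml.neg χ).conj (Fml.neg (Fml.countLe 0 χ))).or (Fml.neg (Fml.countLe 1 χ))

/-- `ζ_Diff := □^{≤m} ⋀_{ψ∈sub(φ)} ∀x(Q_ψ(x) ↔ ∃^{≠}x ψ^†)`. -/
noncomputable def zetaDiff (P : ℕ → ℕ) (Q : BFml → ℕ) (φ : BFml) : Fml :=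
  Fml.boxLe φ.md (conjList (φ.subf.toList.map fun ψ =>
    Fml.fal ((Fml.atom (Q ψ)).iff (existsNe (transDiff P Q ψ)))))
/-! A full product model with vertical factor `Diff` on `V` is, column by column, a constant
domain first-order model with domain `V`: the horizontal worlds become Kripke worlds and the
points of `V` become individuals. Under this reading `◇_v ψ` at `(w, a)` says that some
individual other than `a` satisfies `ψ^†` at `w`, which `∃^{≠}x` expresses with counting
quantifiers of subscript at most 1. The fresh predicate `Q_ψ` names that property, and
`ζ_Diff` forces the names to be correct at every world a formula of depth `m` can see.
Conversely, a constant domain model of `ζ_Diff ∧ φ^†` yields the full product of its frame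
with the difference frame on its domain, and the truth lemma for `ψ` only consults `ζ_Diff`
up to the modal depth of `ψ`. -/

theorem Set.exists_mem_ne_iff {α : Type*} (s : Set α) (a : α) :
    (∃ b ∈ s, b ≠ a) ↔ (a ∉ s ∧ s.Nonempty) ∨ s.Nontrivial := by
  constructor
  · rintro ⟨b, hb, hba⟩
    by_cases ha : a ∈ s
    · exact Or.inr ⟨b, hb, a, ha, hba⟩
    · exact Or.inl ⟨ha, b, hb⟩
  · rintro (⟨ha, b, hb⟩ | hs)
    · exact ⟨b, hb, ne_of_mem_of_not_mem hb ha⟩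
    · exact hs.exists_ne a

namespace KModel

variable (M : KModel)

theorem sat_top (w : M.W) (a : M.D) : M.sat Fml.top w a := by
  simp [Fml.top, sat]

theorem sat_iff (ψ χ : Fml) (w : M.W) (a : M.D) :
    M.sat (ψ.iff χ) w a ↔ (M.sat ψ w a ↔ M.sat χ w a) := by
  simp only [Fml.iff, Fml.imp, sat]
  tauto

theorem sat_fal (χ : Fml) (w : M.W) (a : M.D) :
    M.sat (Fml.fal χ) w a ↔ ∀ b ∈ M.dom w, M.sat χ w b := by
  simp [Fml.fal, sat, Set.eq_empty_iff_forall_notMem]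

theorem sat_box (χ : Fml) (w : M.W) (a : M.D) :
    M.sat χ.box w a ↔ ∀ v, M.R w v → M.sat χ v a := by
  simp [Fml.box, sat]

theorem sat_conjList (L : List Fml) (w : M.W) (a : M.D) :
    M.sat (conjList L) w a ↔ ∀ χ ∈ L, M.sat χ w a := by
  induction L with
  | nil => simpa [conjList] using M.sat_top w a
  | cons ψ L ih => simp [conjList, sat, ih]

theorem sat_boxLe_succ (χ : Fml) (n : ℕ) (w : M.W) (a : M.D) :
    M.sat (Fml.boxLe (n + 1) χ) w a ↔
      M.sat χ w a ∧ ∀ v, M.R w v → M.sat (Fml.boxLe n χ) v a := by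
  induction n generalizing w with
  | zero => simp [Fml.boxLe, Fml.boxIter, sat, sat_box]
  | succ n ih =>
    rw [Fml.boxLe, sat, ih, Fml.boxIter, sat_box]
    simp only [Fml.boxLe, sat, forall_and, and_assoc]

theorem sat_boxLe_of_forall {χ : Fml} {a : M.D} (h : ∀ w, M.sat χ w a) (n : ℕ) (w : M.W) :
    M.sat (Fml.boxLe n χ) w a := by
  induction n generalizing w with
  | zero => exact h w
  | succ n ih => exact (M.sat_boxLe_succ χ n w a).2 ⟨h w, fun v _ => ih v⟩

theorem sat_existsNe (χ : Fml) (w : M.W) {a : M.D} (ha : a ∈ M.dom w) :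
    M.sat (existsNe χ) w a ↔ ∃ b ∈ M.dom w, M.sat χ w b ∧ b ≠ a := by
  have hS := Set.exists_mem_ne_iff {b | b ∈ M.dom w ∧ M.sat χ w b} a
  simp only [Set.mem_ofPred_eq, and_assoc, ha, true_and] at hS
  rw [hS, ← Set.encard_pos, ← Set.one_lt_encard_iff_nontrivial]
  simp only [existsNe, Fml.or, sat, Nat.cast_zero, Nat.cast_one, not_le, pos_iff_ne_zero]
  tauto

end KModel

namespace Fml

theorem cpt_boxIter (χ : Fml) (n : ℕ) : (boxIter n χ).cpt = χ.cpt := by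
  induction n with
  | zero => rfl
  | succ n ih => simp [boxIter, box, cpt, ih]

theorem cpt_boxLe (χ : Fml) (n : ℕ) : (boxLe n χ).cpt = χ.cpt := by
  induction n with
  | zero => rfl
  | succ n ih => simp [boxLe, cpt, ih, cpt_boxIter]

end Fml

theorem cpt_conjList_le {c : ℕ} {L : List Fml} (h : ∀ χ ∈ L, χ.cpt ≤ c) :
    (conjList L).cpt ≤ c := by
  induction L with
  | nil => simp [conjList, Fml.top, Fml.cpt]
  | cons ψ L ih => simp_all [conjList, Fml.cpt]

theorem cpt_existsNe (χ : Fml) : (existsNe χ).cpt = max 1 χ.cpt := by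
  simp only [existsNe, Fml.or, Fml.cpt]
  omega

theorem BFml.mem_subf_self (ψ : BFml) : ψ ∈ ψ.subf := by
  cases ψ <;> simp [BFml.subf]

namespace ProdModel

variable {M : ProdModel}

theorem Full.satDiff_dia (hM : M.Full) (ψ : BFml) (w : M.Wh) (a : M.V) :
    M.satDiff (.dia ψ) (w, a) ↔ ∃ u, M.Rh w u ∧ M.satDiff ψ (u, a) := by
  simp [satDiff, show M.S = Set.univ from hM]

theorem Full.satDiff_diaU (hM : M.Full) (ψ : BFml) (w : M.Wh) (a : M.V) :
    M.satDiff (.diaU ψ) (w, a) ↔ ∃ b, M.satDiff ψ (w, b) ∧ b ≠ a := by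
  simp only [satDiff, show M.S = Set.univ from hM, Set.mem_univ, true_and, Prod.exists]
  exact ⟨fun ⟨_, b, rfl, hb, hψ⟩ => ⟨b, hψ, hb⟩, fun ⟨b, hψ, hb⟩ => ⟨w, b, rfl, hb, hψ⟩⟩

end ProdModel

section Translation

variable (P : ℕ → ℕ) (Q : BFml → ℕ)

theorem cpt_transDiff (ψ : BFml) : (transDiff P Q ψ).cpt = 0 := by
  induction ψ <;> simp [transDiff, Fml.cpt, *]

theorem cpt_conj_zetaDiff_transDiff_le_one (φ : BFml) :
    (Fml.conj (zetaDiff P Q φ) (transDiff P Q φ)).cpt ≤ 1 := by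
  simp only [zetaDiff, Fml.cpt, Fml.cpt_boxLe, cpt_transDiff]
  refine max_le (cpt_conjList_le fun χ hχ => ?_) zero_le_one
  obtain ⟨ψ, -, rfl⟩ := List.mem_map.mp hχ
  simp [Fml.fal, Fml.iff, Fml.imp, Fml.cpt, cpt_existsNe, cpt_transDiff]

noncomputable def zetaConj (φ : BFml) : Fml :=
  conjList (φ.subf.toList.map fun ψ =>
    Fml.fal ((Fml.atom (Q ψ)).iff (existsNe (transDiff P Q ψ))))

theorem zetaDiff_eq_boxLe (φ : BFml) : zetaDiff P Q φ = Fml.boxLe φ.md (zetaConj P Q φ) := rfl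

theorem KModel.sat_zetaConj (N : KModel) (φ : BFml) (w : N.W) (a : N.D) :
    N.sat (zetaConj P Q φ) w a ↔ ∀ ψ ∈ φ.subf, ∀ b ∈ N.dom w,
      (b ∈ N.I w (Q ψ) ↔ N.sat (existsNe (transDiff P Q ψ)) w b) := by
  simp [zetaConj, N.sat_conjList, N.sat_fal, N.sat_iff, KModel.sat]

namespace ProdModel

variable (M : ProdModel)

abbrev toKModel : KModel where
  W := M.Wh
  R := M.Rh
  D := M.V
  Dne := M.Vne
  dom := fun _ => Set.univ
  domNe := fun _ => @Set.univ_nonempty _ M.Vne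
  I := fun w n => {v | (∃ k, n = P k ∧ (w, v) ∈ M.Val k) ∨
    ∃ ψ, n = Q ψ ∧ M.satDiff (.diaU ψ) (w, v)}
  Isub := fun _ _ => Set.subset_univ _

variable {P Q}

theorem mem_toKModel_I_P (hP : Function.Injective P) (hPQ : ∀ k ψ, P k ≠ Q ψ) (k : ℕ)
    (w : M.Wh) (v : M.V) : v ∈ (M.toKModel P Q).I w (P k) ↔ (w, v) ∈ M.Val k := by
  simp [hP.eq_iff, hPQ]

theorem mem_toKModel_I_Q (hQ : Function.Injective Q) (hPQ : ∀ k ψ, P k ≠ Q ψ) (ψ : BFml)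
    (w : M.Wh) (v : M.V) : v ∈ (M.toKModel P Q).I w (Q ψ) ↔ M.satDiff (.diaU ψ) (w, v) := by
  simp [hQ.eq_iff, fun k => (hPQ k ψ).symm]

variable {M}

theorem Full.toKModel_sat_transDiff (hM : M.Full) (hP : Function.Injective P)
    (hQ : Function.Injective Q) (hPQ : ∀ k ψ, P k ≠ Q ψ) (ψ : BFml) (w : M.Wh) (a : M.V) :
    (M.toKModel P Q).sat (transDiff P Q ψ) w a ↔ M.satDiff ψ (w, a) := by
  induction ψ generalizing w a with
  | var k => exact M.mem_toKModel_I_P hP hPQ k w a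
  | neg ψ ih => simp only [transDiff, KModel.sat, satDiff, ih]
  | conj ψ χ ihψ ihχ => simp only [transDiff, KModel.sat, satDiff, ihψ, ihχ]
  | dia ψ ih =>
    rw [hM.satDiff_dia]
    exact exists_congr fun u => and_congr Iff.rfl (ih u a)
  | diaU ψ => exact M.mem_toKModel_I_Q hQ hPQ ψ w a

theorem Full.toKModel_sat_zetaDiff (hM : M.Full) (hP : Function.Injective P)
    (hQ : Function.Injective Q) (hPQ : ∀ k ψ, P k ≠ Q ψ) (φ : BFml) (w : M.Wh) (a : M.V) :
    (M.toKModel P Q).sat (zetaDiff P Q φ) w a := by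
  rw [zetaDiff_eq_boxLe]
  refine (M.toKModel P Q).sat_boxLe_of_forall (fun u => ?_) _ w
  refine ((M.toKModel P Q).sat_zetaConj P Q φ u a).2 fun ψ _ b _ => ?_
  rw [M.mem_toKModel_I_Q hQ hPQ, KModel.sat_existsNe _ _ _ (Set.mem_univ b), hM.satDiff_diaU]
  simp only [hM.toKModel_sat_transDiff hP hQ hPQ, Set.mem_univ, true_and]

end ProdModel

namespace KModel

variable (N : KModel)

abbrev toProdModel (w₀ : N.W) : ProdModel where
  Wh := N.W
  Rh := N.R
  V := N.dom w₀
  Vne := (N.domNe w₀).to_subtype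
  S := Set.univ
  Sne := ⟨(w₀, ⟨_, (N.domNe w₀).some_mem⟩), trivial⟩
  Val := fun k => {p | ↑p.2 ∈ N.I p.1 (P k)}

variable {N} {P Q}

theorem toProdModel_full (w₀ : N.W) : (N.toProdModel P w₀).Full := rfl

theorem toProdModel_satDiff_iff (hN : N.constDom) {φ ψ : BFml} (hψ : ψ.subf ⊆ φ.subf)
    {n : ℕ} (hn : ψ.md ≤ n) {w₀ w : N.W} {a : N.D}
    (hζ : N.sat (Fml.boxLe n (zetaConj P Q φ)) w a) (v : N.dom w₀) :
    (N.toProdModel P w₀).satDiff ψ (w, v) ↔ N.sat (transDiff P Q ψ) w v := by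
  induction ψ generalizing n w v with
  | var k => rfl
  | neg ψ ih =>
    simp only [BFml.subf, BFml.md, Finset.insert_subset_iff] at hψ hn
    simp only [transDiff, sat, ProdModel.satDiff, ih hψ.2 hn hζ]
  | conj ψ χ ihψ ihχ =>
    simp only [BFml.subf, BFml.md, Finset.insert_subset_iff, Finset.union_subset_iff,
      max_le_iff] at hψ hn
    simp only [transDiff, sat, ProdModel.satDiff, ihψ hψ.2.1 hn.1 hζ, ihχ hψ.2.2 hn.2 hζ]
  | dia ψ ih =>
    simp only [BFml.subf, BFml.md, Finset.insert_subset_iff] at hψ hn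
    obtain ⟨n, rfl⟩ : ∃ n', n = n' + 1 := ⟨n - 1, by omega⟩
    have hsucc := ((N.sat_boxLe_succ _ n w a).1 hζ).2
    rw [(toProdModel_full w₀).satDiff_dia]
    exact exists_congr fun u => and_congr_right fun hu => ih hψ.2 (by omega) (hsucc u hu) v
  | diaU ψ ih =>
    simp only [BFml.subf, BFml.md, Finset.insert_subset_iff] at hψ hn
    obtain ⟨n, rfl⟩ : ∃ n', n = n' + 1 := ⟨n - 1, by omega⟩
    have hQ := (sat_zetaConj P Q N φ w a).1 ((N.sat_boxLe_succ _ n w a).1 hζ).1 ψ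
      (hψ.2 ψ.mem_subf_self)
    have hv : (v : N.D) ∈ N.dom w := hN w₀ w ▸ v.2
    rw [(toProdModel_full w₀).satDiff_diaU, transDiff, sat, hQ v hv, sat_existsNe _ _ _ hv]
    simp only [ih hψ.2 (by omega) hζ, hN w w₀, Subtype.exists, ne_eq, Subtype.ext_iff,
      exists_prop]

end KModel

end Translation

/-- with P_i and Q_ψ pairwise distinct fresh unary predicates, φ is
satisfiable in a full product model with difference (Diff) vertical factor iff
`ζ_Diff ∧ φ^†` is satisfiable with respect to QK; moreover all counting quantifiers
in `ζ_Diff ∧ φ^†` have subscripts at most 1. -/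
theorem stmt_14 (φ : BFml) (P : ℕ → ℕ) (Q : BFml → ℕ)
    (hPinj : Function.Injective P) (hQinj : Function.Injective Q)
    (hPQ : ∀ k ψ, P k ≠ Q ψ) :
    ((∃ M : ProdModel, M.Full ∧ ∃ p ∈ M.S, M.satDiff φ p) ↔
      satQK (Fml.conj (zetaDiff P Q φ) (transDiff P Q φ))) ∧
    (Fml.conj (zetaDiff P Q φ) (transDiff P Q φ)).cpt ≤ 1 := by
  refine ⟨⟨?_, ?_⟩, cpt_conj_zetaDiff_transDiff_le_one P Q φ⟩
  · rintro ⟨M, hM, ⟨w, a⟩, -, hφ⟩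
    exact ⟨M.toKModel P Q, fun _ _ => rfl, w, a, trivial,
      hM.toKModel_sat_zetaDiff hPinj hQinj hPQ φ w a,
      (hM.toKModel_sat_transDiff hPinj hQinj hPQ φ w a).2 hφ⟩
  · rintro ⟨N, hN, w₀, a₀, ha₀, hζ, hφ⟩
    rw [zetaDiff_eq_boxLe] at hζ
    refine ⟨N.toProdModel P w₀, KModel.toProdModel_full w₀, (w₀, ⟨a₀, ha₀⟩), trivial, ?_⟩
    exact (KModel.toProdModel_satDiff_iff hN subset_rfl le_rfl hζ _).2 hφ
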